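/- For any positive integers m and n, there exists an orthogonal (m+n)×(m+n) real matrix Q such that for every row j, the sum of squares of the last m entries of row j equals m/(m+n). -/

import Mathlib

/-!
Call an orthogonal matrix on `α ⊕ κ` balanced with mass `c` if each of its rows has squared
norm `c` on the `κ`-columns. Permuting the two column blocks turns mass `c` into `1 - c`. If the
`κ`-columns `V` of a balanced matrix have mass `c`, rotating each plane spanned by a column of `V`
and a fresh coordinate through the angle with `cos² = c / (1 + c)` gives a balanced matrix on
`(α ⊕ κ) ⊕ κ` with mass `c / (1 + c)`. In terms of block sizes these moves are
`(m, n - m) ↦ (m, n)` and `(n, m) ↦ (m, n)`, so Euclid's algorithm reaches every pair `(m, n)`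
from a pair with an empty block, where the identity matrix works.
-/

open Matrix

namespace Matrix

variable {l m n o : Type*} [Fintype l] [Fintype m] [DecidableEq n] [DecidableEq o]

theorem transpose_mul_self_submatrix_eq_one {R : Type*} [CommSemiring R] {Q : Matrix m n R}
    (hQ : Qᵀ * Q = 1) (e₁ : l ≃ m) {e₂ : o → n} (he₂ : Function.Injective e₂) :
    (Q.submatrix e₁ e₂)ᵀ * Q.submatrix e₁ e₂ = 1 := by
  rw [transpose_submatrix, submatrix_mul_equiv, hQ, submatrix_one _ he₂]

theorem sum_sq_row_eq_one_of_transpose_mul_self {R : Type*} [CommRing R] [Fintype n]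
    {Q : Matrix n n R} (hQ : Qᵀ * Q = 1) (j : n) : ∑ k, Q j k ^ 2 = 1 := by
  have h : (Q * Qᵀ) j j = 1 := by rw [mul_eq_one_comm.mp hQ, one_apply_eq]
  simpa only [mul_apply, transpose_apply, sq] using h

end Matrix

section BlockRotation

variable {R ι κ : Type*} [CommRing R] [Fintype κ] [DecidableEq ι] [DecidableEq κ]

/-- When `Vᵀ * V = 1`, this rotates each plane spanned by a column `V k` and the basis vector
`Sum.inr k` by the angle with cosine `r` and sine `s`, fixing their orthogonal complement. -/
def blockRotation (V : Matrix ι κ R) (r s : R) : Matrix (ι ⊕ κ) (ι ⊕ κ) R :=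
  fromBlocks (1 + (r - 1) • (V * Vᵀ)) (s • V) (-(s • Vᵀ)) (r • 1)

theorem blockRotation_transpose_mul_self [Fintype ι] {V : Matrix ι κ R} {r s : R}
    (hV : Vᵀ * V = 1) (hrs : r ^ 2 + s ^ 2 = 1) :
    (blockRotation V r s)ᵀ * blockRotation V r s = 1 := by
  have hPP : V * Vᵀ * (V * Vᵀ) = V * Vᵀ := by
    rw [Matrix.mul_assoc, ← Matrix.mul_assoc Vᵀ, hV, Matrix.one_mul]
  have hPV : V * Vᵀ * V = V := by rw [Matrix.mul_assoc, hV, Matrix.mul_one]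
  have hVP : Vᵀ * (V * Vᵀ) = Vᵀ := by rw [← Matrix.mul_assoc, hV, Matrix.one_mul]
  rw [blockRotation, fromBlocks_transpose, fromBlocks_multiply, ← fromBlocks_one]
  congr 1 <;>
  simp only [transpose_add, transpose_one, transpose_smul, transpose_mul, transpose_transpose,
    transpose_neg, Matrix.neg_mul, Matrix.mul_neg, Matrix.smul_mul, Matrix.mul_smul,
    Matrix.add_mul, Matrix.mul_add, Matrix.one_mul, Matrix.mul_one, smul_smul, hPP, hPV, hVP,
    hV] <;>
  match_scalars <;> first | ring1 | linear_combination hrs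

@[simp]
theorem blockRotation_inl_inr (V : Matrix ι κ R) (r s : R) (j : ι) (k : κ) :
    blockRotation V r s (.inl j) (.inr k) = s * V j k := rfl

@[simp]
theorem blockRotation_inr_inr (V : Matrix ι κ R) (r s : R) (j k : κ) :
    blockRotation V r s (.inr j) (.inr k) = r * (1 : Matrix κ κ R) j k := rfl

end BlockRotation

def HasBalancedOrthogonal (α κ : Type*) [Fintype α] [Fintype κ] [DecidableEq α]
    [DecidableEq κ] (c : ℝ) : Prop :=
  ∃ Q : Matrix (α ⊕ κ) (α ⊕ κ) ℝ, Qᵀ * Q = 1 ∧ ∀ j, ∑ k, Q j (.inr k) ^ 2 = c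

namespace HasBalancedOrthogonal

variable {α β κ : Type*} [Fintype α] [Fintype β] [Fintype κ]
  [DecidableEq α] [DecidableEq β] [DecidableEq κ] {c : ℝ}

theorem of_isEmpty_right [IsEmpty κ] : HasBalancedOrthogonal α κ 0 :=
  ⟨1, by simp, fun _ => by simp⟩

theorem congr_left (e : α ≃ β) (h : HasBalancedOrthogonal α κ c) :
    HasBalancedOrthogonal β κ c := by
  obtain ⟨Q, hQ, hmass⟩ := h
  let f : β ⊕ κ ≃ α ⊕ κ := Equiv.sumCongr e.symm (Equiv.refl κ)
  exact ⟨Q.submatrix f f, transpose_mul_self_submatrix_eq_one hQ f f.injective,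
    fun j => hmass (f j)⟩

theorem swap (h : HasBalancedOrthogonal α κ c) : HasBalancedOrthogonal κ α (1 - c) := by
  obtain ⟨Q, hQ, hmass⟩ := h
  let f : κ ⊕ α ≃ α ⊕ κ := Equiv.sumComm κ α
  refine ⟨Q.submatrix f f, transpose_mul_self_submatrix_eq_one hQ f f.injective, fun j => ?_⟩
  have hrow := sum_sq_row_eq_one_of_transpose_mul_self hQ (f j)
  rw [Fintype.sum_sum_type, hmass] at hrow
  rw [← hrow, add_sub_cancel_right]
  rfl

theorem step (hc : 0 ≤ c) (h : HasBalancedOrthogonal α κ c) :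
    HasBalancedOrthogonal (α ⊕ κ) κ (c / (1 + c)) := by
  obtain ⟨Q, hQ, hmass⟩ := h
  let V : Matrix (α ⊕ κ) κ ℝ := Q.submatrix id .inr
  have hV : Vᵀ * V = 1 :=
    transpose_mul_self_submatrix_eq_one hQ (Equiv.refl _) Sum.inr_injective
  have hc₁ : 0 < 1 + c := by linarith
  let r := √(c / (1 + c))
  let s := √(1 / (1 + c))
  have hr : r ^ 2 = c / (1 + c) := Real.sq_sqrt (by positivity)
  have hs : s ^ 2 = 1 / (1 + c) := Real.sq_sqrt (by positivity)
  have hrs : r ^ 2 + s ^ 2 = 1 := by rw [hr, hs, ← add_div, add_comm, div_self hc₁.ne']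
  refine ⟨blockRotation V r s, blockRotation_transpose_mul_self hV hrs, ?_⟩
  rintro (j | j)
  · calc ∑ k, (s * V j k) ^ 2 = s ^ 2 * ∑ k, Q j (.inr k) ^ 2 := by
          simp only [mul_pow, Finset.mul_sum]; rfl
      _ = c / (1 + c) := by rw [hmass, hs]; ring
  · simp [one_apply, hr]

end HasBalancedOrthogonal

theorem hasBalancedOrthogonal_fin :
    ∀ m n : ℕ, HasBalancedOrthogonal (Fin n) (Fin m) (m / (m + n))
  | 0, n => by simpa using HasBalancedOrthogonal.of_isEmpty_right
  | m + 1, n =>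
    if hmn : m + 1 ≤ n then by
      have h := (hasBalancedOrthogonal_fin (m + 1) (n - (m + 1))).step (by positivity)
      convert h.congr_left (finSumFinEquiv.trans (finCongr (Nat.sub_add_cancel hmn))) using 1
      have hn : (n : ℝ) ≠ 0 := Nat.cast_ne_zero.mpr (by omega)
      rw [Nat.cast_sub hmn, add_sub_cancel]
      field_simp
      ring
    else by
      convert (hasBalancedOrthogonal_fin n (m + 1)).swap using 1
      field_simp
      ring
termination_by m n => 2 * m + n

theorem exists_orthogonal_matrix_balanced_rows (m n : ℕ) :
    ∃ Q : Matrix (Fin (m + n)) (Fin (m + n)) ℝ,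
      Matrix.transpose Q * Q = 1 ∧
      ∀ j : Fin (m + n),
        ∑ i : Fin m, (Q j ⟨n + i, by omega⟩) ^ 2 = (m : ℝ) / (m + n) := by
  obtain ⟨Q, hQ, hmass⟩ := hasBalancedOrthogonal_fin m n
  let e : Fin (m + n) ≃ Fin n ⊕ Fin m := (finSumFinEquiv.trans (finCongr (add_comm n m))).symm
  have he : ∀ i : Fin m, e ⟨n + i, by omega⟩ = .inr i := fun i => by
    rw [Equiv.symm_apply_eq]
    ext
    simp [add_comm]
  refine ⟨Q.submatrix e e, transpose_mul_self_submatrix_eq_one hQ e e.injective, fun j => ?_⟩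
  simp only [submatrix_apply, he]
  exact hmass (e j)
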